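/- arXiv:2507.04731 — 2 statements merged into one kernel-verified Lean document; each statement's English description precedes it below -/
import Mathlib

section
/- Assume every matrix A_i (i = 1,…,m) is invertible. Let π be a finite switching sequence and let k ≥ 1 be such that dim V_{k-1} ≤ dim R(π) < dim V_k. Then there exists a switching sequence π₀ of length at most k such that dim R(π₀π) > dim R(π), where π₀π denotes the concatenation in which π₀ is applied first. -/
/-!
If no sequence of length at most `k` enlarges `R(π)`, then `R(σ π) = R(π)` for every such `σ`.
Since `R(σ π) = R(π) + Φ_π R(σ)`, where `Φ_π` is the product of the `A_i` along `π`, this gives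
`Φ_π R(σ) ⊆ R(π)`. Every vector of `V_k` is a sum of vectors of such `R(σ)`, so
`Φ_π V_k ⊆ R(π)`, and invertibility of `Φ_π` yields `dim V_k ≤ dim R(π)`.
-/

/-- Reachable space of a discrete-time switched linear control system
`x_k = A_{i_k} x_{k-1} + B_{i_k} u_k` along the switching sequence `π`
(the head of the list is the first applied mode):
`R(ε) = {0}` and `R(π' i) = A_i R(π') + Im(B_i)`. -/
def reach {n m : ℕ} (A : Fin m → Matrix (Fin n) (Fin n) ℝ) {q : Fin m → ℕ}
    (B : ∀ i, Matrix (Fin n) (Fin (q i)) ℝ) (π : List (Fin m)) :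
    Submodule ℝ (Fin n → ℝ) :=
  π.foldl (fun S i =>
    Submodule.map (Matrix.mulVecLin (A i)) S ⊔ LinearMap.range (Matrix.mulVecLin (B i))) ⊥

/-- The subspaces `V_k`: `V_0 = {0}`, `V_1 = Σ_i Im B_i`, and
`V_{k+1} = V_k + Σ_i A_i V_k` for `k ≥ 1`. -/
def Vsp {n m : ℕ} (A : Fin m → Matrix (Fin n) (Fin n) ℝ) {q : Fin m → ℕ}
    (B : ∀ i, Matrix (Fin n) (Fin (q i)) ℝ) : ℕ → Submodule ℝ (Fin n → ℝ)
  | 0 => ⊥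
  | 1 => ⨆ i, LinearMap.range (Matrix.mulVecLin (B i))
  | (k + 2) => Vsp A B (k + 1) ⊔
      ⨆ i, Submodule.map (Matrix.mulVecLin (A i)) (Vsp A B (k + 1))

section SwitchedSystem

variable {n m : ℕ} (A : Fin m → Matrix (Fin n) (Fin n) ℝ) {q : Fin m → ℕ}
    (B : ∀ i, Matrix (Fin n) (Fin (q i)) ℝ)

def transitionMatrix (π : List (Fin m)) : Matrix (Fin n) (Fin n) ℝ :=
  (π.map A).reverse.prod

@[simp]
lemma transitionMatrix_nil : transitionMatrix A [] = 1 := rfl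

@[simp]
lemma transitionMatrix_concat (π : List (Fin m)) (i : Fin m) :
    transitionMatrix A (π ++ [i]) = A i * transitionMatrix A π := by
  simp [transitionMatrix]

lemma isUnit_transitionMatrix (hA : ∀ i, IsUnit (A i)) (π : List (Fin m)) :
    IsUnit (transitionMatrix A π) :=
  List.prod_isUnit fun _ h => by
    obtain ⟨i, -, rfl⟩ := List.mem_map.mp (List.mem_reverse.mp h)
    exact hA i

@[simp]
lemma reach_nil : reach A B [] = ⊥ := rfl

@[simp]
lemma reach_concat (π : List (Fin m)) (i : Fin m) :
    reach A B (π ++ [i]) =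
      Submodule.map (Matrix.mulVecLin (A i)) (reach A B π) ⊔
        LinearMap.range (Matrix.mulVecLin (B i)) := by
  simp [reach, List.foldl_append]

lemma reach_append (σ π : List (Fin m)) :
    reach A B (σ ++ π) =
      reach A B π ⊔ Submodule.map (Matrix.mulVecLin (transitionMatrix A π)) (reach A B σ) := by
  induction π using List.reverseRecOn with
  | nil => simp
  | append_singleton π i ih =>
    rw [← List.append_assoc, reach_concat, reach_concat, ih, Submodule.map_sup,
      transitionMatrix_concat, Matrix.mulVecLin_mul, Submodule.map_comp]
    exact sup_right_comm _ _ _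

lemma Vsp_le_iSup_reach :
    ∀ k, Vsp A B k ≤ ⨆ (σ : List (Fin m)) (_ : σ.length ≤ k), reach A B σ
  | 0 => bot_le
  | 1 => iSup_le fun i => le_iSup₂_of_le [i] (by simp) (by simp [reach])
  | k + 2 => by
    refine sup_le ((Vsp_le_iSup_reach (k + 1)).trans ?_) (iSup_le fun i => ?_)
    · exact iSup₂_le fun σ hσ => le_iSup₂_of_le σ (by omega) le_rfl
    · refine (Submodule.map_mono (Vsp_le_iSup_reach (k + 1))).trans ?_
      simp only [Submodule.map_iSup]
      exact iSup₂_le fun σ hσ => le_iSup₂_of_le (σ ++ [i])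
        (by rw [List.length_append, List.length_singleton]; omega)
        (by rw [reach_concat]; exact le_sup_left)

lemma map_transitionMatrix_reach_le {σ π : List (Fin m)}
    (h : Module.finrank ℝ (reach A B (σ ++ π)) ≤ Module.finrank ℝ (reach A B π)) :
    Submodule.map (Matrix.mulVecLin (transitionMatrix A π)) (reach A B σ) ≤ reach A B π := by
  have hle : reach A B π ≤ reach A B (σ ++ π) := reach_append A B σ π ▸ le_sup_left
  rw [Submodule.eq_of_le_of_finrank_le hle h, reach_append]
  exact le_sup_right

end SwitchedSystem

theorem stmt7_general {n m : ℕ}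
    (A : Fin m → Matrix (Fin n) (Fin n) ℝ) {q : Fin m → ℕ}
    (B : ∀ i, Matrix (Fin n) (Fin (q i)) ℝ)
    (hA : ∀ i, IsUnit (A i)) (π : List (Fin m)) (k : ℕ)
    (h₂ : Module.finrank ℝ (reach A B π) < Module.finrank ℝ (Vsp A B k)) :
    ∃ π₀ : List (Fin m), π₀.length ≤ k ∧
      Module.finrank ℝ (reach A B π) < Module.finrank ℝ (reach A B (π₀ ++ π)) := by
  by_contra! hstuck
  set Φ := Matrix.mulVecLin (transitionMatrix A π)
  have hΦ : Function.Injective Φ :=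
    Matrix.mulVec_injective_of_isUnit (isUnit_transitionMatrix A hA π)
  have hV : Submodule.map Φ (Vsp A B k) ≤ reach A B π := by
    refine (Submodule.map_mono (Vsp_le_iSup_reach A B k)).trans ?_
    simp only [Submodule.map_iSup]
    exact iSup₂_le fun σ hσ => map_transitionMatrix_reach_le A B (hstuck σ hσ)
  have hrank := (Submodule.equivMapOfInjective Φ hΦ (Vsp A B k)).finrank_eq
  have := Submodule.finrank_mono hV
  omega

/-- If `dim V_{k-1} ≤ dim R(π) < dim V_k`, then `R(π)` can be strictly enlarged by
prepending a sequence of length at most `k`. -/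
theorem stmt7 {n m : ℕ} (hn : 1 ≤ n) (hm : 1 ≤ m)
    (A : Fin m → Matrix (Fin n) (Fin n) ℝ) {q : Fin m → ℕ}
    (B : ∀ i, Matrix (Fin n) (Fin (q i)) ℝ)
    (hA : ∀ i, IsUnit (A i)) (π : List (Fin m)) (k : ℕ) (hk : 1 ≤ k)
    (h₁ : Module.finrank ℝ (Vsp A B (k - 1)) ≤ Module.finrank ℝ (reach A B π))
    (h₂ : Module.finrank ℝ (reach A B π) < Module.finrank ℝ (Vsp A B k)) :
    ∃ π₀ : List (Fin m), π₀.length ≤ k ∧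
      Module.finrank ℝ (reach A B π) < Module.finrank ℝ (reach A B (π₀ ++ π)) :=
  stmt7_general A B hA π k h₂
end

section
/- For all integers n, m with 1 ≤ m ≤ n there exist invertible matrices A_1,…,A_m ∈ ℝ^{n×n} and matrices B_1,…,B_m ∈ ℝ^{n×1} such that the associated switched linear control system is controllable, there exists a controllable switching sequence of length n + m(m-1)/2, and no controllable switching sequence has length strictly smaller than n + m(m-1)/2. -/
/-!
Take permutation matrices for the `A_j` and the single input `e_0` on mode `0`. Every reachable
space is then spanned by the standard basis vectors indexed by a set of positions that evolves
combinatorially: mode `j` permutes it, and mode `0` also adds position `0`. Mode `0` cycles the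
positions `0, …, n - m` and mode `j ≠ 0` swaps positions `n - j - 1` and `n - j`.

Each step adds at most one position, and only through mode `0`, so mode `0` occurs at least `n`
times. Positions enter the block `{n - j, …, n - 1}` of size `j` only through mode `j`, one per
occurrence, so mode `j` occurs at least `j` times; altogether `n + m(m-1)/2`. Conversely, after
`0^(n-m+1)` the cascades `(m - t, …, m - 1, 0)` for `t = 1, …, m - 1` each add one position:
the swaps walk the hole at `n - m + t` down to `n - m`, where the cycle fills it from the input.
-/

open Finset Equiv

lemma reach_append_singleton {n m : ℕ} (A : Fin m → Matrix (Fin n) (Fin n) ℝ) {q : Fin m → ℕ}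
    (B : ∀ i, Matrix (Fin n) (Fin (q i)) ℝ) (π : List (Fin m)) (i : Fin m) :
    reach A B (π ++ [i]) =
      (reach A B π).map (A i).mulVecLin ⊔ LinearMap.range (B i).mulVecLin := by
  simp [reach, List.foldl_append]

section CoordinateSubspaces

variable {n : ℕ}

noncomputable def coordSubspace (s : Finset (Fin n)) : Submodule ℝ (Fin n → ℝ) :=
  Submodule.span ℝ (Pi.basisFun ℝ (Fin n) '' s)

lemma coordSubspace_eq_top_iff {s : Finset (Fin n)} : coordSubspace s = ⊤ ↔ s = univ := by
  refine ⟨fun h => eq_univ_of_forall fun t => ?_, fun h => ?_⟩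
  · have ht : Pi.basisFun ℝ (Fin n) t ∈ coordSubspace s := h ▸ Submodule.mem_top
    exact_mod_cast (Pi.basisFun ℝ (Fin n)).self_mem_span_image.1 ht
  · rw [coordSubspace, h, coe_univ, Set.image_univ, Module.Basis.span_eq]

lemma coordSubspace_union (s t : Finset (Fin n)) :
    coordSubspace (s ∪ t) = coordSubspace s ⊔ coordSubspace t := by
  rw [coordSubspace, coe_union, Set.image_union, Submodule.span_union]; rfl

lemma map_permMatrixHom_coordSubspace (τ : Perm (Fin n)) (s : Finset (Fin n)) :
    (coordSubspace s).map (Matrix.permMatrixHom τ : Matrix (Fin n) (Fin n) ℝ).mulVecLin =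
      coordSubspace (s.map τ.toEmbedding) := by
  rw [coordSubspace, coordSubspace, Submodule.map_span, coe_map, Set.image_image, Set.image_image]
  congr 1
  refine Set.image_congr fun t _ => ?_
  rw [Matrix.mulVecLin_apply, Matrix.permMatrixHom_apply, Matrix.permMatrix_mulVec,
    Pi.basisFun_apply, Pi.basisFun_apply, Pi.single_comp_equiv, Perm.inv_def, symm_symm]
  rfl

end CoordinateSubspaces

section PermutationSystems

variable {n m : ℕ} (σ : Fin m → Perm (Fin n)) (inp : Fin m → Finset (Fin n))

def coordReach (π : List (Fin m)) : Finset (Fin n) :=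
  π.foldl (fun s i => s.map (σ i).toEmbedding ∪ inp i) ∅

@[simp]
lemma coordReach_nil : coordReach σ inp [] = ∅ := rfl

@[simp]
lemma coordReach_append_singleton (π : List (Fin m)) (i : Fin m) :
    coordReach σ inp (π ++ [i]) = (coordReach σ inp π).map (σ i).toEmbedding ∪ inp i := by
  simp [coordReach, List.foldl_append]

lemma mem_coordReach_append_singleton {π : List (Fin m)} {i : Fin m} {x : Fin n} :
    x ∈ coordReach σ inp (π ++ [i]) ↔ (σ i).symm x ∈ coordReach σ inp π ∨ x ∈ inp i := by
  simp [mem_map_equiv]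

lemma reach_permMatrixHom_eq_coordSubspace {q : Fin m → ℕ}
    (B : ∀ i, Matrix (Fin n) (Fin (q i)) ℝ)
    (hB : ∀ i, LinearMap.range (B i).mulVecLin = coordSubspace (inp i)) (π : List (Fin m)) :
    reach (fun i => Matrix.permMatrixHom (σ i)) B π = coordSubspace (coordReach σ inp π) := by
  induction π using List.reverseRecOn with
  | nil => simp [reach, coordSubspace]
  | append_singleton π i ih =>
    rw [reach_append_singleton, ih, map_permMatrixHom_coordSubspace, hB,
      coordReach_append_singleton, coordSubspace_union]

lemma card_coordReach_inter_le_count (D : Finset (Fin n)) (j : Fin m)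
    (hflux : ∀ i, #(D.map (σ i).symm.toEmbedding \ D) + #(inp i ∩ D) ≤ if i = j then 1 else 0)
    (π : List (Fin m)) : #(coordReach σ inp π ∩ D) ≤ π.count j := by
  induction π using List.reverseRecOn with
  | nil => simp
  | append_singleton π i ih =>
    rw [coordReach_append_singleton, union_inter_distrib_right, List.count_append,
      List.count_singleton]
    have hi := hflux i
    set s := coordReach σ inp π
    set E := D.map (σ i).symm.toEmbedding
    have hpull : #(s.map (σ i).toEmbedding ∩ D) ≤ #(s ∩ D) + #(E \ D) :=
      calc #(s.map (σ i).toEmbedding ∩ D) = #((s ∩ E).map (σ i).toEmbedding) := by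
            rw [map_inter, map_map]; simp
        _ = #(s ∩ E) := card_map _
        _ ≤ #(s ∩ D ∪ E \ D) := card_le_card fun x hx => by
            simp only [mem_inter, mem_union, mem_sdiff] at hx ⊢; tauto
        _ ≤ #(s ∩ D) + #(E \ D) := card_union_le _ _
    have hunion := card_union_le (s.map (σ i).toEmbedding ∩ D) (inp i ∩ D)
    split_ifs at hi with hij
    · subst hij
      simp only [beq_self_eq_true, if_true]
      omega
    · simp only [beq_iff_eq, hij, if_false]
      omega

end PermutationSystems

lemma Fin.coe_cycleRange_symm {n : ℕ} [NeZero n] (c x : Fin n) :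
    ((Fin.cycleRange c).symm x : ℕ) =
      if (x : ℕ) = 0 then (c : ℕ) else if (x : ℕ) ≤ c then (x : ℕ) - 1 else x := by
  obtain ⟨y, rfl⟩ := (Fin.cycleRange c).surjective x
  rw [symm_apply_apply]
  rcases lt_trichotomy y c with h | rfl | h
  · rw [Fin.coe_cycleRange_of_lt h]
    grind
  · simp
  · rw [Fin.cycleRange_of_gt h]
    grind

lemma Fin.coe_cycleRange {n : ℕ} [NeZero n] (c x : Fin n) :
    (Fin.cycleRange c x : ℕ) =
      if (x : ℕ) < c then (x : ℕ) + 1 else if (x : ℕ) = c then 0 else x := by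
  rcases lt_trichotomy x c with h | rfl | h
  · rw [Fin.coe_cycleRange_of_lt h, if_pos (Fin.lt_def.1 h)]
  · simp
  · rw [Fin.cycleRange_of_gt h]
    grind

def below {n : ℕ} (a : ℕ) : Finset (Fin n) := {x | (x : ℕ) < a}

@[simp]
lemma mem_below {n a : ℕ} {x : Fin n} : x ∈ below a ↔ (x : ℕ) < a := by simp [below]

lemma range_mulVecLin_replicateCol {R ι : Type*} [CommSemiring R] (v : ι → R) :
    LinearMap.range (Matrix.replicateCol (Fin 1) v).mulVecLin = R ∙ v := by
  rw [Matrix.range_mulVecLin]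
  congr 1
  exact Set.range_const (c := v)

section CascadeSystem

variable (n m : ℕ) [NeZero n] [NeZero m]

def mode (j : Fin m) : Perm (Fin n) :=
  if hj : j = 0 then Fin.cycleRange ⟨n - m, Nat.sub_lt n.pos_of_neZero m.pos_of_neZero⟩
  else swap ⟨n - j - 1, by have := n.pos_of_neZero; omega⟩
    ⟨n - j, Nat.sub_lt n.pos_of_neZero (Nat.pos_of_ne_zero (Fin.val_ne_zero_iff.2 hj))⟩

def modeInput (j : Fin m) : Finset (Fin n) := if j = 0 then {0} else ∅

noncomputable def inputMatrix (j : Fin m) : Matrix (Fin n) (Fin 1) ℝ :=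
  Matrix.replicateCol (Fin 1) (if j = 0 then Pi.single 0 1 else 0)

variable {n m}

lemma range_inputMatrix (j : Fin m) :
    LinearMap.range (inputMatrix n m j).mulVecLin = coordSubspace (modeInput n m j) := by
  rw [inputMatrix, range_mulVecLin_replicateCol, coordSubspace, modeInput]
  split_ifs
  · rw [coe_singleton, Set.image_singleton, Pi.basisFun_apply]
  · rw [coe_empty, Set.image_empty, Submodule.span_empty, Submodule.span_zero_singleton]

lemma mem_modeInput {j : Fin m} {x : Fin n} : x ∈ modeInput n m j ↔ j = 0 ∧ (x : ℕ) = 0 := by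
  rw [Fin.val_eq_zero_iff]
  by_cases hj : j = 0 <;> simp [modeInput, hj]

lemma coe_mode_zero (x : Fin n) :
    (mode n m 0 x : ℕ) =
      if (x : ℕ) < n - m then (x : ℕ) + 1 else if (x : ℕ) = n - m then 0 else x := by
  rw [mode, dif_pos rfl, Fin.coe_cycleRange]

lemma coe_mode_zero_symm (x : Fin n) :
    ((mode n m 0).symm x : ℕ) =
      if (x : ℕ) = 0 then n - m else if (x : ℕ) ≤ n - m then (x : ℕ) - 1 else x := by
  rw [mode, dif_pos rfl, Fin.coe_cycleRange_symm]

lemma mode_symm_of_ne_zero {j : Fin m} (hj : j ≠ 0) : (mode n m j).symm = mode n m j := by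
  rw [mode, dif_neg hj, symm_swap]

lemma coe_mode_of_ne_zero {j : Fin m} (hj : j ≠ 0) (x : Fin n) :
    (mode n m j x : ℕ) =
      if (x : ℕ) = n - j - 1 then n - j else if (x : ℕ) = n - j then n - j - 1 else x := by
  rw [mode, dif_neg hj, swap_apply_def]
  simp only [Fin.ext_iff]
  split_ifs <;> rfl

end CascadeSystem

section UpperBound

variable {n m : ℕ} [NeZero m]

variable (m) in
def cascade : ℕ → List (Fin m)
  | 0 => [0]
  | q + 1 => ⟨m - (q + 1), Nat.sub_lt m.pos_of_neZero q.succ_pos⟩ :: cascade q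

variable (n m) in
def word : ℕ → List (Fin m)
  | 0 => List.replicate (n - m + 1) 0
  | t + 1 => word t ++ cascade m (t + 1)

lemma length_cascade (q : ℕ) : (cascade m q).length = q + 1 := by
  induction q with
  | zero => rfl
  | succ q ih => simp [cascade, ih]

lemma two_mul_length_word (t : ℕ) :
    2 * (word n m t).length = 2 * (n - m + 1) + t * (t + 3) := by
  induction t with
  | zero => simp [word]
  | succ t ih =>
    rw [word, List.length_append, length_cascade, mul_add, ih]
    ring

lemma length_word_pred (hmn : m ≤ n) : (word n m (m - 1)).length = n + m * (m - 1) / 2 := by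
  have h := two_mul_length_word (n := n) (m := m) (m - 1)
  have h2 : 2 * (word n m (m - 1)).length = 2 * n + m * (m - 1) := by
    obtain ⟨k, rfl⟩ := Nat.exists_eq_add_of_le' m.pos_of_neZero
    obtain ⟨l, rfl⟩ := Nat.exists_eq_add_of_le hmn
    simp only [Nat.add_sub_cancel, Nat.add_sub_cancel_left] at h ⊢
    ring_nf at h ⊢
    omega
  generalize m * (m - 1) = P at h2 ⊢
  omega

variable [NeZero n]

lemma coordReach_replicate_zero {k : ℕ} (hk : k ≤ n - m + 1) :
    coordReach (mode n m) (modeInput n m) (List.replicate k 0) = below k := by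
  induction k with
  | zero => ext x; simp
  | succ k ih =>
    ext x
    rw [List.replicate_succ', mem_coordReach_append_singleton, ih (by omega), mem_below,
      mem_below, coe_mode_zero_symm, mem_modeInput]
    simp only [true_and]
    split_ifs <;> omega

lemma coordReach_append_cascade (hmn : m ≤ n) {q T : ℕ} (hqT : q ≤ T) (hT : T < m)
    {l : List (Fin m)}
    (hl : ∀ x : Fin n, x ∈ coordReach (mode n m) (modeInput n m) l ↔
      (x : ℕ) < n - m + T + 1 ∧ (x : ℕ) ≠ n - m + q) :
    coordReach (mode n m) (modeInput n m) (l ++ cascade m q) = below (n - m + T + 1) := by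
  induction q generalizing l with
  | zero =>
    ext x
    rw [cascade, mem_coordReach_append_singleton, hl, mem_below, coe_mode_zero_symm,
      mem_modeInput]
    simp only [true_and]
    split_ifs <;> omega
  | succ q ih =>
    rw [cascade, ← List.singleton_append, ← List.append_assoc]
    refine ih (by omega) fun x => ?_
    have hj : (⟨m - (q + 1), Nat.sub_lt m.pos_of_neZero q.succ_pos⟩ : Fin m) ≠ 0 := by
      simp only [ne_eq, Fin.ext_iff, Fin.val_zero]; omega
    rw [mem_coordReach_append_singleton, hl, mode_symm_of_ne_zero hj, coe_mode_of_ne_zero hj,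
      mem_modeInput]
    simp only [hj, false_and, or_false]
    split_ifs <;> omega

lemma coordReach_word (hmn : m ≤ n) {t : ℕ} (ht : t < m) :
    coordReach (mode n m) (modeInput n m) (word n m t) = below (n - m + 1 + t) := by
  induction t with
  | zero => exact coordReach_replicate_zero le_rfl
  | succ t ih =>
    rw [word, show n - m + 1 + (t + 1) = n - m + (t + 1) + 1 by omega]
    refine coordReach_append_cascade hmn le_rfl ht fun x => ?_
    rw [ih (by omega), mem_below]
    omega

end UpperBound

lemma le_length_of_le_count {m : ℕ} [NeZero m] (N : ℕ) (π : List (Fin m))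
    (h0 : N ≤ π.count 0) (h : ∀ j : Fin m, j ≠ 0 → (j : ℕ) ≤ π.count j) :
    N + m * (m - 1) / 2 ≤ π.length := by
  have hlen : ∑ j : Fin m, π.count j = π.length := by
    simpa using Multiset.sum_count_eq_card (s := univ) (m := (π : Multiset (Fin m))) (by simp)
  have hgauss : ∑ j : Fin m, ((j : ℕ) + if j = 0 then N else 0) = N + m * (m - 1) / 2 := by
    rw [sum_add_distrib, sum_ite_eq' univ (0 : Fin m), if_pos (mem_univ _),
      Fin.sum_univ_eq_sum_range (fun i => i), sum_range_id, add_comm]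
  rw [← hlen, ← hgauss]
  refine sum_le_sum fun j _ => ?_
  by_cases hj : j = 0
  · subst hj; simpa using h0
  · simpa [hj] using h j hj

section LowerBound

variable {n m : ℕ} [NeZero n] [NeZero m]

lemma le_count_zero {π : List (Fin m)}
    (hπ : coordReach (mode n m) (modeInput n m) π = univ) : n ≤ π.count 0 := by
  have h := card_coordReach_inter_le_count (mode n m) (modeInput n m) univ 0
    (fun i => by by_cases hi : i = 0 <;> simp [modeInput, hi]) π
  simpa [hπ] using h

lemma gate_flux_le (hmn : m ≤ n) {j : Fin m} (hj : j ≠ 0) (i : Fin m) :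
    #((below (n - j))ᶜ.map (mode n m i).symm.toEmbedding \ (below (n - j))ᶜ) +
      #(modeInput n m i ∩ (below (n - j))ᶜ) ≤ if i = j then 1 else 0 := by
  have hjn : (j : ℕ) < n := lt_of_lt_of_le j.isLt hmn
  have hj0 : (j : ℕ) ≠ 0 := Fin.val_ne_zero_iff.2 hj
  have hinput : modeInput n m i ∩ (below (n - j))ᶜ = ∅ := by
    ext x
    simp only [mem_inter, mem_modeInput, mem_compl, mem_below, notMem_empty, iff_false]
    omega
  rw [hinput, card_empty, add_zero]
  split_ifs with hij
  · subst hij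
    refine card_le_one.2 fun a ha b hb => ?_
    simp only [mem_sdiff, mem_map_equiv, symm_symm, mem_compl, mem_below, not_lt,
      coe_mode_of_ne_zero hj] at ha hb
    ext
    split_ifs at ha hb <;> omega
  · rw [Nat.le_zero, card_eq_zero, sdiff_eq_empty_iff_subset]
    intro x hx
    simp only [mem_map_equiv, symm_symm, mem_compl, mem_below, not_lt] at hx ⊢
    by_cases hi : i = 0
    · subst hi
      rw [coe_mode_zero] at hx
      split_ifs at hx <;> omega
    · have hij' : (i : ℕ) ≠ j := Fin.val_ne_iff.2 hij
      rw [coe_mode_of_ne_zero hi] at hx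
      split_ifs at hx <;> omega

lemma le_count_of_ne_zero (hmn : m ≤ n) {j : Fin m} (hj : j ≠ 0) {π : List (Fin m)}
    (hπ : coordReach (mode n m) (modeInput n m) π = univ) : (j : ℕ) ≤ π.count j := by
  have hcard : #((below (n - j))ᶜ : Finset (Fin n)) = j := by
    rw [card_compl, below, Fin.card_filter_val_lt, Fintype.card_fin]
    have := j.isLt
    omega
  have h := card_coordReach_inter_le_count _ _ _ j (gate_flux_le hmn hj) π
  rwa [hπ, univ_inter, hcard] at h

end LowerBound

/-- For `1 ≤ m ≤ n` there is a controllable system (with invertible `A_i`) whose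
shortest controllable sequences have length exactly `n + m(m-1)/2`. -/
theorem stmt9 (n m : ℕ) (hm : 1 ≤ m) (hmn : m ≤ n) :
    ∃ (A : Fin m → Matrix (Fin n) (Fin n) ℝ) (B : Fin m → Matrix (Fin n) (Fin 1) ℝ),
      (∀ i, IsUnit (A i)) ∧
      (⋃ π : List (Fin m), (reach A B π : Set (Fin n → ℝ))) = Set.univ ∧
      (∃ π : List (Fin m), reach A B π = ⊤ ∧ π.length = n + m * (m - 1) / 2) ∧
      (∀ π : List (Fin m), reach A B π = ⊤ → n + m * (m - 1) / 2 ≤ π.length) := by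
  have : NeZero m := ⟨by omega⟩
  have : NeZero n := ⟨by omega⟩
  have hreach := reach_permMatrixHom_eq_coordSubspace (mode n m) (modeInput n m)
    (inputMatrix n m) range_inputMatrix
  have htop : reach (fun i => Matrix.permMatrixHom (mode n m i)) (inputMatrix n m)
      (word n m (m - 1)) = ⊤ := by
    rw [hreach, coordSubspace_eq_top_iff, coordReach_word hmn (by omega)]
    exact eq_univ_of_forall fun x => by simpa using (by omega : (x : ℕ) < n - m + 1 + (m - 1))
  refine ⟨_, inputMatrix n m, fun _ => (Group.isUnit _).map _, ?_, ⟨_, htop, length_word_pred hmn⟩,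
    fun π hπ => ?_⟩
  · exact Set.eq_univ_of_subset (Set.subset_iUnion_of_subset _ (by rw [htop]; rfl)) rfl
  · rw [hreach, coordSubspace_eq_top_iff] at hπ
    exact le_length_of_le_count n π (le_count_zero hπ) fun j hj => le_count_of_ne_zero hmn hj hπ
end
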